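/- Let f : ℝ × (0,∞) → ℝ be C² and write f_vex, f_cav for a convex-concave decomposition in the first argument (f(·,ϑ) = f_vex(·,ϑ) + f_cav(·,ϑ), f_vex convex, f_cav concave in φ), and assume f concave in ϑ. Then for all φⁿ, φⁿ⁺¹ ∈ ℝ and ϑⁿ, ϑⁿ⁺¹ > 0: f(φⁿ⁺¹, ϑⁿ⁺¹) - f(φⁿ, ϑⁿ) - [∂_φ f_vex(φⁿ⁺¹, ϑⁿ⁺¹) + ∂_φ f_cav(φⁿ, ϑⁿ⁺¹)](φⁿ⁺¹ - φⁿ) - ∂_ϑ f(φⁿ, ϑⁿ)(ϑⁿ⁺¹ - ϑⁿ) ≤ 0. -/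

import Mathlib

/-!
Telescope the increment through `f(φⁿ, ϑⁿ⁺¹)` and split that value at `ϑⁿ⁺¹` into its convex and
concave parts. The three remaining differences are tangent-line inequalities. The convex part
lies above its tangent at `φⁿ⁺¹`. The concave part lies below its tangent at `φⁿ`. The map
`ϑ ↦ f(φⁿ, ϑ)` lies below its tangent at `ϑⁿ`.
-/

lemma ConvexOn.apply_add_deriv_mul_sub_le {S : Set ℝ} {g : ℝ → ℝ} (hg : ConvexOn ℝ S g)
    {x y : ℝ} (hx : x ∈ S) (hy : y ∈ S) (hd : DifferentiableAt ℝ g x) :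
    g x + deriv g x * (y - x) ≤ g y := by
  rcases lt_trichotomy x y with hxy | rfl | hyx
  · have h := hg.deriv_le_slope hx hy hxy hd
    rw [slope_def_field, le_div_iff₀ (sub_pos.mpr hxy)] at h
    linarith
  · simp
  · have h := hg.slope_le_deriv hy hx hyx hd
    rw [slope_def_field, div_le_iff₀ (sub_pos.mpr hyx)] at h
    linarith

lemma ConcaveOn.le_apply_add_deriv_mul_sub {S : Set ℝ} {g : ℝ → ℝ} (hg : ConcaveOn ℝ S g)
    {x y : ℝ} (hx : x ∈ S) (hy : y ∈ S) (hd : DifferentiableAt ℝ g x) :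
    g y ≤ g x + deriv g x * (y - x) := by
  have h := hg.neg.apply_add_deriv_mul_sub_le hx hy hd.neg
  rw [deriv.neg'] at h
  simp only [Pi.neg_apply] at h
  linarith

/-- Pointwise core of the discrete energy dissipation estimate: for a convex-concave
splitting `f(·,ϑ) = f_vex(·,ϑ) + f_cav(·,ϑ)` (convex/concave in `φ`) with `f`
concave in `ϑ`, the fully discrete increment
`f(φⁿ⁺¹,ϑⁿ⁺¹) - f(φⁿ,ϑⁿ) - [∂_φ f_vex(φⁿ⁺¹,ϑⁿ⁺¹) + ∂_φ f_cav(φⁿ,ϑⁿ⁺¹)](φⁿ⁺¹-φⁿ)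
 - ∂_ϑ f(φⁿ,ϑⁿ)(ϑⁿ⁺¹-ϑⁿ)` is nonpositive. -/
theorem stmt_18 (f fvex fcav : ℝ → ℝ → ℝ)
    (hsplit : ∀ φ ϑ, 0 < ϑ → f φ ϑ = fvex φ ϑ + fcav φ ϑ)
    (hvex : ∀ ϑ, 0 < ϑ → ConvexOn ℝ Set.univ (fun φ => fvex φ ϑ))
    (hcav : ∀ ϑ, 0 < ϑ → ConcaveOn ℝ Set.univ (fun φ => fcav φ ϑ))
    (hconcϑ : ∀ φ, ConcaveOn ℝ (Set.Ioi 0) (fun ϑ => f φ ϑ))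
    (hdvex : ∀ ϑ, 0 < ϑ → Differentiable ℝ (fun φ => fvex φ ϑ))
    (hdcav : ∀ ϑ, 0 < ϑ → Differentiable ℝ (fun φ => fcav φ ϑ))
    (hdϑ : ∀ φ, ∀ ϑ, 0 < ϑ → DifferentiableAt ℝ (fun t => f φ t) ϑ) :
    ∀ (φn φn1 ϑn ϑn1 : ℝ), 0 < ϑn → 0 < ϑn1 →
      f φn1 ϑn1 - f φn ϑn
        - (deriv (fun p => fvex p ϑn1) φn1 + deriv (fun p => fcav p ϑn1) φn)
            * (φn1 - φn)
        - deriv (fun t => f φn t) ϑn * (ϑn1 - ϑn) ≤ 0 := by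
  intro φn φn1 ϑn ϑn1 hϑn hϑn1
  have hconvex := (hvex ϑn1 hϑn1).apply_add_deriv_mul_sub_le (Set.mem_univ φn1)
    (Set.mem_univ φn) (hdvex ϑn1 hϑn1 φn1)
  have hconcave := (hcav ϑn1 hϑn1).le_apply_add_deriv_mul_sub (Set.mem_univ φn)
    (Set.mem_univ φn1) (hdcav ϑn1 hϑn1 φn)
  have htemp := (hconcϑ φn).le_apply_add_deriv_mul_sub (Set.mem_Ioi.mpr hϑn)
    (Set.mem_Ioi.mpr hϑn1) (hdϑ φn ϑn hϑn)
  rw [hsplit φn1 ϑn1 hϑn1]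
  rw [hsplit φn ϑn1 hϑn1] at htemp
  linarith
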